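/- Let q ≥ 2 be an integer and n ≥ 1. Then Σ_{m=0}^n C_q(n,m) = 2^{{n}}, and Σ_{m=0}^n C_q(n,m)·m·(−1)^{{n−m}} = q^k if n = q^k for some integer k ≥ 0, and this signed sum equals 0 if n is not a power of q. -/

import Mathlib

open Finset

/-- Base-`q` digit sum `{n} = Σ_t n_t`, where `n_t = n / q^t % q`. -/
def digitSum (q n : ℕ) : ℕ := ∑ t ∈ Finset.range (n + 1), n / q ^ t % q

/-- Fractal binomial coefficient `C_q(n,m) = Π_t binom(n_t, m_t)`. -/
def Cq (q n m : ℕ) : ℕ :=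
  ∏ t ∈ Finset.range (n + m + 1), Nat.choose (n / q ^ t % q) (m / q ^ t % q)

/-!
Digit by digit, `C_q` and the digit sum of `n - m` factor, so the binomial theorem in each digit
gives the generating function `Σ_m C_q(n,m) x^m y^{{n-m}} = Π_t (x^{q^t} + y)^{n_t}`.
At `x = y = 1` this is `2^{{n}}`. For the signed sum take `y = -1` and differentiate in `x` at
`x = 1`: every factor `x^{q^t} - 1` vanishes at `1`, so the product is divisible by `(x - 1)^{{n}}`
and its derivative at `1` vanishes unless `{n} = 1`, i.e. `n = q^k`, where the product is
`x^{q^k} - 1`.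
-/

open Polynomial

section Digits

variable {q : ℕ}

lemma lt_pow_of_lt (hq : 1 < q) {n t : ℕ} (h : n < t) : n < q ^ t :=
  (Nat.lt_pow_self hq).trans_le (Nat.pow_le_pow_right (by omega) h.le)

lemma digitSum_eq_sum_range (hq : 1 < q) {n T : ℕ} (hT : n < T) :
    digitSum q n = ∑ t ∈ range T, n / q ^ t % q := by
  refine sum_subset (range_subset_range.2 hT) fun t _ ht => ?_
  rw [Nat.div_eq_of_lt (lt_pow_of_lt hq (by simpa using ht)), Nat.zero_mod]

lemma digitSum_eq_mod_add_digitSum_div (hq : 1 < q) (n : ℕ) :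
    digitSum q n = n % q + digitSum q (n / q) := by
  rw [digitSum_eq_sum_range hq (T := n + 2) (by omega), sum_range_succ', add_comm,
    digitSum_eq_sum_range hq (Nat.lt_succ_of_le (Nat.div_le_self n q))]
  simp only [pow_zero, Nat.div_one, pow_succ', Nat.div_div_eq_div_mul]

lemma digitSum_mul_add (hq : 1 < q) {c d : ℕ} (hd : d < q) :
    digitSum q (q * c + d) = d + digitSum q c := by
  rw [digitSum_eq_mod_add_digitSum_div hq, Nat.mul_add_mod, Nat.mod_eq_of_lt hd,
    Nat.mul_add_div (by omega), Nat.div_eq_of_lt hd, add_zero]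

lemma eq_zero_of_digitSum_eq_zero (hq : 1 < q) {n : ℕ} (h : digitSum q n = 0) : n = 0 := by
  induction n using Nat.strong_induction_on with
  | _ n ih =>
    rw [digitSum_eq_mod_add_digitSum_div hq] at h
    have hn := Nat.div_add_mod n q
    rcases Nat.eq_zero_or_pos n with rfl | hpos
    · rfl
    · rw [ih (n / q) (Nat.div_lt_self hpos hq) (by omega)] at hn
      omega

lemma exists_eq_pow_of_digitSum_eq_one (hq : 1 < q) {n : ℕ} (h : digitSum q n = 1) :
    ∃ k, n = q ^ k := by
  induction n using Nat.strong_induction_on with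
  | _ n ih =>
    rw [digitSum_eq_mod_add_digitSum_div hq] at h
    have hn := Nat.div_add_mod n q
    rcases (by omega : n % q = 0 ∧ digitSum q (n / q) = 1 ∨ n % q = 1 ∧ digitSum q (n / q) = 0)
      with ⟨hmod, hdiv⟩ | ⟨hmod, hdiv⟩
    · have hpos : 0 < n := Nat.pos_of_ne_zero fun h0 => by simp [h0, digitSum] at hdiv
      obtain ⟨k, hk⟩ := ih (n / q) (Nat.div_lt_self hpos hq) hdiv
      exact ⟨k + 1, by rw [pow_succ', ← hk]; omega⟩
    · rw [eq_zero_of_digitSum_eq_zero hq hdiv] at hn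
      exact ⟨0, by rw [pow_zero]; omega⟩

lemma pow_div_pow_mod (hq : 1 < q) (k t : ℕ) : q ^ k / q ^ t % q = if t = k then 1 else 0 := by
  rcases lt_trichotomy t k with h | rfl | h
  · rw [if_neg h.ne, Nat.pow_div h.le (by omega)]
    exact Nat.mod_eq_zero_of_dvd (dvd_pow_self q (by omega))
  · rw [if_pos rfl, Nat.div_self (by positivity), Nat.mod_eq_of_lt hq]
  · rw [if_neg h.ne', Nat.div_eq_of_lt (Nat.pow_lt_pow_right hq h), Nat.zero_mod]

end Digits

section FractalBinomial

variable {q : ℕ}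

lemma Cq_eq_prod_range (hq : 1 < q) {n m T : ℕ} (hT : n + m < T) :
    Cq q n m = ∏ t ∈ range T, (n / q ^ t % q).choose (m / q ^ t % q) := by
  refine prod_subset (range_subset_range.2 hT) fun t _ ht => ?_
  have ht : n + m < t := by simpa using ht
  rw [Nat.div_eq_of_lt (lt_pow_of_lt hq (by omega : n < t)),
    Nat.div_eq_of_lt (lt_pow_of_lt hq (by omega : m < t))]
  simp

lemma Cq_eq_choose_mul (hq : 1 < q) (n m : ℕ) :
    Cq q n m = (n % q).choose (m % q) * Cq q (n / q) (m / q) := by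
  have hlt : n / q + m / q < n + m + 1 := by
    have := Nat.div_le_self n q; have := Nat.div_le_self m q; omega
  rw [Cq_eq_prod_range hq (T := n + m + 2) (by omega), prod_range_succ', mul_comm,
    Cq_eq_prod_range hq hlt]
  simp only [pow_zero, Nat.div_one, pow_succ', Nat.div_div_eq_div_mul]

lemma Cq_eq_zero_of_lt (hq : 1 < q) {n m : ℕ} (h : n < m) : Cq q n m = 0 := by
  induction m using Nat.strong_induction_on generalizing n with
  | _ m ih =>
    rw [Cq_eq_choose_mul hq]
    rcases lt_or_ge (n % q) (m % q) with hmod | hmod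
    · rw [Nat.choose_eq_zero_of_lt hmod, zero_mul]
    · have hdiv : n / q < m / q := by
        refine Nat.lt_of_mul_lt_mul_left (a := q) ?_
        have := Nat.div_add_mod n q; have := Nat.div_add_mod m q
        omega
      rw [ih (m / q) (Nat.div_lt_self (by omega) hq) hdiv, mul_zero]

end FractalBinomial

lemma sum_range_mul_eq_sum_sum {M : Type*} [AddCommMonoid M] (f : ℕ → M) (a b : ℕ) :
    ∑ m ∈ range (a * b), f m = ∑ j ∈ range b, ∑ r ∈ range a, f (a * j + r) := by
  induction b with
  | zero => simp
  | succ b ih => rw [Nat.mul_succ, sum_range_add, ih, sum_range_succ]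

section GeneratingFunction

variable {R : Type*} [CommSemiring R] {q : ℕ}

lemma sum_range_choose_mul_pow_mul_pow (x y : R) {b : ℕ} (hb : b < q) :
    ∑ r ∈ range q, (b.choose r : R) * x ^ r * y ^ (b - r) = (x + y) ^ b := by
  rw [add_pow]
  refine (sum_subset (range_subset_range.2 hb) fun r _ hr => ?_).symm.trans
    (sum_congr rfl fun r _ => by ring)
  rw [Nat.choose_eq_zero_of_lt (by simpa using hr), Nat.cast_zero, zero_mul, zero_mul]

lemma Cq_mul_pow_mul_pow_of_mul_add (hq : 1 < q) (x y : R) {n j r : ℕ} (hr : r < q) :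
    (Cq q n (q * j + r) : R) * x ^ (q * j + r) * y ^ digitSum q (n - (q * j + r)) =
      ((Cq q (n / q) j : R) * (x ^ q) ^ j * y ^ digitSum q (n / q - j)) *
        ((n % q).choose r * x ^ r * y ^ (n % q - r)) := by
  rw [Cq_eq_choose_mul hq, Nat.mul_add_mod, Nat.mod_eq_of_lt hr, Nat.mul_add_div (by omega),
    Nat.div_eq_of_lt hr, add_zero]
  rcases lt_or_ge (n % q) r with hmod | hmod
  · simp [Nat.choose_eq_zero_of_lt hmod]
  rcases lt_or_ge (n / q) j with hdiv | hdiv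
  · simp [Cq_eq_zero_of_lt hq hdiv]
  have hsub : n - (q * j + r) = q * (n / q - j) + (n % q - r) := by
    have := Nat.div_add_mod n q; have := Nat.mul_le_mul_left q hdiv
    have := Nat.mul_sub q (n / q) j
    omega
  rw [hsub, digitSum_mul_add hq (by have := Nat.mod_lt n (by omega : 0 < q); omega)]
  push_cast
  ring

theorem sum_range_Cq_mul_pow_mul_pow (hq : 1 < q) (K : ℕ) {n : ℕ} (hn : n < q ^ K) (x y : R) :
    ∑ m ∈ range (q ^ K), (Cq q n m : R) * x ^ m * y ^ digitSum q (n - m) =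
      ∏ t ∈ range K, (x ^ q ^ t + y) ^ (n / q ^ t % q) := by
  induction K generalizing n x with
  | zero =>
    obtain rfl : n = 0 := by simpa using hn
    simp [Cq, digitSum]
  | succ K ih =>
    have hdiv : n / q < q ^ K := by
      rw [Nat.div_lt_iff_lt_mul (by omega), ← pow_succ]; exact hn
    rw [pow_succ', sum_range_mul_eq_sum_sum, prod_range_succ', sum_congr rfl fun j _ => sum_congr rfl fun r hr =>
      Cq_mul_pow_mul_pow_of_mul_add hq x y (n := n) (j := j) (mem_range.1 hr)]
    rw [← sum_mul_sum, ih hdiv, sum_range_choose_mul_pow_mul_pow x y (Nat.mod_lt n (by omega))]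
    congr 1
    · refine prod_congr rfl fun t _ => ?_
      rw [← pow_mul, ← pow_succ', Nat.div_div_eq_div_mul, ← pow_succ']
    · simp

end GeneratingFunction

section RowSums

variable {q : ℕ}

lemma sum_range_succ_Cq_mul_eq {R : Type*} [Semiring R] (hq : 1 < q) {n K : ℕ} (hK : n < q ^ K)
    (g : ℕ → R) :
    ∑ m ∈ range (n + 1), (Cq q n m : R) * g m = ∑ m ∈ range (q ^ K), (Cq q n m : R) * g m := by
  refine sum_subset (range_subset_range.2 hK) fun m _ hm => ?_
  rw [Cq_eq_zero_of_lt hq (by simpa using hm), Nat.cast_zero, zero_mul]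

theorem sum_range_Cq (hq : 1 < q) (n : ℕ) :
    ∑ m ∈ range (n + 1), Cq q n m = 2 ^ digitSum q n := by
  have hK : n < q ^ (n + 1) := lt_pow_of_lt hq n.lt_succ_self
  calc ∑ m ∈ range (n + 1), Cq q n m
      = ∑ m ∈ range (q ^ (n + 1)), (Cq q n m : ℕ) * 1 ^ m * 1 ^ digitSum q (n - m) := by
        simpa using sum_range_succ_Cq_mul_eq hq hK (fun _ => (1 : ℕ))
    _ = ∏ t ∈ range (n + 1), (1 ^ q ^ t + 1) ^ (n / q ^ t % q) :=
        sum_range_Cq_mul_pow_mul_pow hq _ hK 1 1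
    _ = 2 ^ digitSum q n := by simp [prod_pow_eq_pow_sum, digitSum]

variable {R : Type*} [CommRing R]

lemma eval_one_derivative_eq_zero_of_sq_dvd {p : R[X]} (h : (X - 1) ^ 2 ∣ p) :
    (derivative p).eval 1 = 0 := by
  have hdvd : X - C 1 ∣ derivative p := by simpa using pow_sub_one_dvd_derivative_of_pow_dvd h
  exact dvd_iff_isRoot.1 hdvd

lemma sub_one_pow_digitSum_dvd_prod (n : ℕ) :
    (X - 1 : R[X]) ^ digitSum q n ∣ ∏ t ∈ range (n + 1), (X ^ q ^ t - 1) ^ (n / q ^ t % q) := by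
  rw [digitSum, ← prod_pow_eq_pow_sum]
  exact prod_dvd_prod_of_dvd _ _ fun t _ => pow_dvd_pow_of_dvd (sub_one_dvd_pow_sub_one X _) _

open scoped Classical in
lemma eval_one_derivative_prod_pow_sub_one (hq : 1 < q) (n : ℕ) :
    (derivative (∏ t ∈ range (n + 1), (X ^ q ^ t - 1 : R[X]) ^ (n / q ^ t % q))).eval 1 =
      if ∃ k, n = q ^ k then (n : R) else 0 := by
  split_ifs with hpow
  · obtain ⟨k, rfl⟩ := hpow
    have hk : k ∈ range (q ^ k + 1) := mem_range.2 (Nat.lt_succ_of_lt (Nat.lt_pow_self hq))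
    simp [pow_div_pow_mod hq, pow_ite, prod_ite_eq', hk, derivative_X_pow]
  · rcases Nat.lt_or_ge (digitSum q n) 2 with h | h
    · have hzero : digitSum q n = 0 := by
        have := mt (exists_eq_pow_of_digitSum_eq_one hq) hpow; omega
      simp [eq_zero_of_digitSum_eq_zero hq hzero]
    · exact eval_one_derivative_eq_zero_of_sq_dvd
        ((pow_dvd_pow _ h).trans (sub_one_pow_digitSum_dvd_prod n))

open scoped Classical in
theorem sum_range_Cq_mul_mul_neg_one_pow (hq : 1 < q) (n : ℕ) :
    ∑ m ∈ range (n + 1), (Cq q n m : R) * m * (-1) ^ digitSum q (n - m) =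
      if ∃ k, n = q ^ k then (n : R) else 0 := by
  have hK : n < q ^ (n + 1) := lt_pow_of_lt hq n.lt_succ_self
  have hgen := sum_range_Cq_mul_pow_mul_pow hq (n + 1) hK (X : R[X]) (-1)
  simp only [← sub_eq_add_neg] at hgen
  rw [← eval_one_derivative_prod_pow_sub_one hq n, ← hgen]
  -- the derivative of `X ^ m` at `1` is the weight `m`
  simpa [mul_assoc, derivative_X_pow, derivative_pow, eval_finsetSum] using
    sum_range_succ_Cq_mul_eq hq hK (fun m => (m : R) * (-1) ^ digitSum q (n - m))

end RowSums

open scoped Classical in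
theorem stmt19_general (q : ℕ) (hq : 2 ≤ q) (n : ℕ) :
    (∑ m ∈ Finset.range (n + 1), Cq q n m) = 2 ^ digitSum q n ∧
    (∑ m ∈ Finset.range (n + 1),
        (Cq q n m : ℝ) * m * (-1 : ℝ) ^ digitSum q (n - m)) =
      if ∃ k : ℕ, n = q ^ k then (n : ℝ) else 0 :=
  ⟨sum_range_Cq hq n, sum_range_Cq_mul_mul_neg_one_pow hq n⟩

open scoped Classical in
/-- Row sums of fractal binomial coefficients: `Σ_{m=0}^n C_q(n,m) = 2^{{n}}`, and the
signed weighted sum `Σ_{m=0}^n C_q(n,m)·m·(−1)^{{n−m}}` equals `q^k` if `n = q^k` and `0`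
if `n` is not a power of `q`. -/
theorem stmt19 (q : ℕ) (hq : 2 ≤ q) (n : ℕ) (hn : 1 ≤ n) :
    (∑ m ∈ Finset.range (n + 1), Cq q n m) = 2 ^ digitSum q n ∧
    (∑ m ∈ Finset.range (n + 1),
        (Cq q n m : ℝ) * m * (-1 : ℝ) ^ digitSum q (n - m)) =
      if ∃ k : ℕ, n = q ^ k then (n : ℝ) else 0 :=
  stmt19_general q hq n
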